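/- arXiv:2209.03018 — 3 statements merged into one kernel-verified Lean document; each statement's English description precedes it below -/
import Mathlib

section
/- The two Hamiltonians H₁ = 2p₁p₂ + q₁p₂² − q₁⁴ + 3q₁²q₂ − q₂² + 3t₂(q₂−q₁²) + (t₁+c)q₁ and H₂ = p₁² + 2q₁p₁p₂ + (q₁²−q₂)p₂² + p₂ − q₁³q₂ + 2q₁q₂² − 3t₂q₁q₂ + (t₁+c)q₂ satisfy the Frobenius integrability condition {H₁,H₂} + ∂H₁/∂t₂ − ∂H₂/∂t₁ = 3t₂, where {·,·} is the canonical Poisson bracket in (q₁,q₂,p₁,p₂). -/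
/-- Partial derivatives of a function of (q₁,q₂,p₁,p₂,t₁,t₂). -/
noncomputable def dq1 (F : ℝ → ℝ → ℝ → ℝ → ℝ → ℝ → ℝ) (a b u v s t : ℝ) : ℝ :=
  deriv (fun x => F x b u v s t) a
noncomputable def dq2 (F : ℝ → ℝ → ℝ → ℝ → ℝ → ℝ → ℝ) (a b u v s t : ℝ) : ℝ :=
  deriv (fun x => F a x u v s t) b
noncomputable def dp1 (F : ℝ → ℝ → ℝ → ℝ → ℝ → ℝ → ℝ) (a b u v s t : ℝ) : ℝ :=
  deriv (fun x => F a b x v s t) u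
noncomputable def dp2 (F : ℝ → ℝ → ℝ → ℝ → ℝ → ℝ → ℝ) (a b u v s t : ℝ) : ℝ :=
  deriv (fun x => F a b u x s t) v
noncomputable def dt1 (F : ℝ → ℝ → ℝ → ℝ → ℝ → ℝ → ℝ) (a b u v s t : ℝ) : ℝ :=
  deriv (fun x => F a b u v x t) s
noncomputable def dt2 (F : ℝ → ℝ → ℝ → ℝ → ℝ → ℝ → ℝ) (a b u v s t : ℝ) : ℝ :=
  deriv (fun x => F a b u v s x) t

/-- Canonical Poisson bracket in (q₁,q₂,p₁,p₂). -/
noncomputable def pbracket (F G : ℝ → ℝ → ℝ → ℝ → ℝ → ℝ → ℝ) (a b u v s t : ℝ) : ℝ :=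
    dq1 F a b u v s t * dp1 G a b u v s t - dp1 F a b u v s t * dq1 G a b u v s t
  + dq2 F a b u v s t * dp2 G a b u v s t - dp2 F a b u v s t * dq2 G a b u v s t

namespace PainleveHamiltonian

variable (c : ℝ)

def H₁ : ℝ → ℝ → ℝ → ℝ → ℝ → ℝ → ℝ := fun q1 q2 p1 p2 t1 t2 =>
  2*p1*p2 + q1*p2^2 - q1^4 + 3*q1^2*q2 - q2^2 + 3*t2*(q2 - q1^2) + (t1 + c)*q1

def H₂ : ℝ → ℝ → ℝ → ℝ → ℝ → ℝ → ℝ := fun q1 q2 p1 p2 t1 t2 =>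
  p1^2 + 2*q1*p1*p2 + (q1^2 - q2)*p2^2 + p2 - q1^3*q2 + 2*q1*q2^2 - 3*t2*q1*q2 + (t1 + c)*q2

variable (q1 q2 p1 p2 t1 t2 : ℝ)

theorem dq1_H₁ : dq1 (H₁ c) q1 q2 p1 p2 t1 t2 = p2^2 - 4*q1^3 + 6*q1*q2 - 6*t2*q1 + t1 + c := by
  simp (disch := fun_prop) only [dq1, H₁, deriv_fun_add, deriv_fun_sub, deriv_fun_mul,
    deriv_fun_pow, deriv_const', deriv_id'', deriv_const_mul_id']
  ring

theorem dq2_H₁ : dq2 (H₁ c) q1 q2 p1 p2 t1 t2 = 3*q1^2 - 2*q2 + 3*t2 := by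
  simp (disch := fun_prop) only [dq2, H₁, deriv_fun_add, deriv_fun_sub, deriv_fun_mul,
    deriv_fun_pow, deriv_const', deriv_id'', deriv_const_mul_id']
  ring

theorem dp1_H₁ : dp1 (H₁ c) q1 q2 p1 p2 t1 t2 = 2*p2 := by
  simp (disch := fun_prop) only [dp1, H₁, deriv_fun_add, deriv_fun_sub, deriv_fun_mul,
    deriv_fun_pow, deriv_const', deriv_const_mul_id']
  ring

theorem dp2_H₁ : dp2 (H₁ c) q1 q2 p1 p2 t1 t2 = 2*p1 + 2*q1*p2 := by
  simp (disch := fun_prop) only [dp2, H₁, deriv_fun_add, deriv_fun_sub, deriv_fun_mul,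
    deriv_fun_pow, deriv_const', deriv_id'', deriv_const_mul_id']
  ring

theorem dt2_H₁ : dt2 (H₁ c) q1 q2 p1 p2 t1 t2 = 3*(q2 - q1^2) := by
  simp (disch := fun_prop) only [dt2, H₁, deriv_fun_add, deriv_fun_sub, deriv_fun_mul,
    deriv_fun_pow, deriv_const', deriv_const_mul_id']
  ring

theorem dq1_H₂ : dq1 (H₂ c) q1 q2 p1 p2 t1 t2 =
    2*p1*p2 + 2*q1*p2^2 - 3*q1^2*q2 + 2*q2^2 - 3*t2*q2 := by
  simp (disch := fun_prop) only [dq1, H₂, deriv_fun_add, deriv_fun_sub, deriv_fun_mul,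
    deriv_fun_pow, deriv_const', deriv_id'', deriv_const_mul_id']
  ring

theorem dq2_H₂ : dq2 (H₂ c) q1 q2 p1 p2 t1 t2 =
    -p2^2 - q1^3 + 4*q1*q2 - 3*t2*q1 + t1 + c := by
  simp (disch := fun_prop) only [dq2, H₂, deriv_fun_add, deriv_fun_sub, deriv_fun_mul,
    deriv_fun_pow, deriv_const', deriv_id'', deriv_const_mul_id', deriv_const_sub_id']
  ring

theorem dp1_H₂ : dp1 (H₂ c) q1 q2 p1 p2 t1 t2 = 2*p1 + 2*q1*p2 := by
  simp (disch := fun_prop) only [dp1, H₂, deriv_fun_add, deriv_fun_sub, deriv_fun_mul,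
    deriv_fun_pow, deriv_const', deriv_id'', deriv_const_mul_id']
  ring

theorem dp2_H₂ : dp2 (H₂ c) q1 q2 p1 p2 t1 t2 = 2*q1*p1 + 2*(q1^2 - q2)*p2 + 1 := by
  simp (disch := fun_prop) only [dp2, H₂, deriv_fun_add, deriv_fun_sub, deriv_fun_mul,
    deriv_fun_pow, deriv_const', deriv_id'', deriv_const_mul_id']
  ring

theorem dt1_H₂ : dt1 (H₂ c) q1 q2 p1 p2 t1 t2 = q2 := by
  simp (disch := fun_prop) only [dt1, H₂, deriv_fun_add, deriv_fun_sub, deriv_fun_mul,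
    deriv_fun_pow, deriv_const', deriv_id'']
  ring

theorem pbracket_H₁_H₂ :
    pbracket (H₁ c) (H₂ c) q1 q2 p1 p2 t1 t2 = 3*q1^2 - 2*q2 + 3*t2 := by
  rw [pbracket, dq1_H₁, dq2_H₁, dp1_H₁, dp2_H₁, dq1_H₂, dq2_H₂, dp1_H₂, dp2_H₂]
  ring

end PainleveHamiltonian

open PainleveHamiltonian in
theorem stmt3 (c : ℝ)
    (H1 H2 : ℝ → ℝ → ℝ → ℝ → ℝ → ℝ → ℝ)
    (hH1 : H1 = fun q1 q2 p1 p2 t1 t2 =>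
      2*p1*p2 + q1*p2^2 - q1^4 + 3*q1^2*q2 - q2^2 + 3*t2*(q2 - q1^2) + (t1 + c)*q1)
    (hH2 : H2 = fun q1 q2 p1 p2 t1 t2 =>
      p1^2 + 2*q1*p1*p2 + (q1^2 - q2)*p2^2 + p2 - q1^3*q2 + 2*q1*q2^2 - 3*t2*q1*q2 + (t1 + c)*q2) :
    ∀ q1 q2 p1 p2 t1 t2 : ℝ,
      pbracket H1 H2 q1 q2 p1 p2 t1 t2
        + dt2 H1 q1 q2 p1 p2 t1 t2 - dt1 H2 q1 q2 p1 p2 t1 t2 = 3*t2 := by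
  obtain rfl : H1 = H₁ c := hH1
  obtain rfl : H2 = H₂ c := hH2
  intro q1 q2 p1 p2 t1 t2
  rw [pbracket_H₁_H₂, dt2_H₁, dt1_H₂]
  ring
end

section
/- The two Hamiltonians H₁ = p₁² − q₂p₂² + q₁³ − 2q₁q₂ + 3t₂(q₂−q₁²) + (3t₂²+t₁)q₁ + c/q₂ and H₂ = −2q₂p₁p₂ − q₁q₂p₂² + p₁ + q₁²q₂ − q₂² − 3t₂q₁q₂ + (3t₂²+t₁)q₂ + cq₁/q₂ satisfy {H₁,H₂} + ∂H₁/∂t₂ − ∂H₂/∂t₁ = t₁ + 3t₂² wherever q₂ ≠ 0. -/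
lemma deriv_cubic (A B C D x : ℝ) :
    deriv (fun t : ℝ => A*t^3 + B*t^2 + C*t + D) x = 3*A*x^2 + 2*B*x + C := by
  have h : HasDerivAt (fun t : ℝ => A*t^3 + B*t^2 + C*t + D)
      (A*((3:ℕ)*x^(3-1)) + B*((2:ℕ)*x^(2-1)) + C*1) x :=
    ((((hasDerivAt_pow 3 x).const_mul A).add ((hasDerivAt_pow 2 x).const_mul B)).add
      ((hasDerivAt_id x).const_mul C)).add_const D
  rw [h.deriv]; push_cast; ring

lemma deriv_quad_inv (A C D k x : ℝ) (hx : x ≠ 0) :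
    deriv (fun t : ℝ => A*t^2 + C*t + D + k*t⁻¹) x = 2*A*x + C - k/x^2 := by
  have h : HasDerivAt (fun t : ℝ => A*t^2 + C*t + D + k*t⁻¹)
      (A*((2:ℕ)*x^(2-1)) + C*1 + k*(-(x^2)⁻¹)) x :=
    ((((hasDerivAt_pow 2 x).const_mul A).add ((hasDerivAt_id x).const_mul C)).add_const D).add
      ((hasDerivAt_inv hx).const_mul k)
  rw [h.deriv]; push_cast; field_simp; ring

theorem stmt4 (c : ℝ)
    (H1 H2 : ℝ → ℝ → ℝ → ℝ → ℝ → ℝ → ℝ)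
    (hH1 : H1 = fun q1 q2 p1 p2 t1 t2 =>
      p1^2 - q2*p2^2 + q1^3 - 2*q1*q2 + 3*t2*(q2 - q1^2) + (3*t2^2 + t1)*q1 + c/q2)
    (hH2 : H2 = fun q1 q2 p1 p2 t1 t2 =>
      -2*q2*p1*p2 - q1*q2*p2^2 + p1 + q1^2*q2 - q2^2 - 3*t2*q1*q2 + (3*t2^2 + t1)*q2 + c*q1/q2) :
    ∀ q1 q2 p1 p2 t1 t2 : ℝ, q2 ≠ 0 →
      pbracket H1 H2 q1 q2 p1 p2 t1 t2
        + dt2 H1 q1 q2 p1 p2 t1 t2 - dt1 H2 q1 q2 p1 p2 t1 t2 = t1 + 3*t2^2 := by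
  intro q1 q2 p1 p2 t1 t2 hq2
  simp only [pbracket, dq1, dq2, dp1, dp2, dt1, dt2, hH1, hH2]
  rw [show (fun x : ℝ => p1^2 - q2*p2^2 + x^3 - 2*x*q2 + 3*t2*(q2 - x^2) + (3*t2^2 + t1)*x + c/q2)
      = (fun x : ℝ => 1*x^3 + (-(3*t2))*x^2 + (-(2*q2)+3*t2^2+t1)*x
          + (p1^2 - q2*p2^2 + 3*t2*q2 + c/q2)) from by funext x; ring,
    show (fun x : ℝ => p1^2 - x*p2^2 + q1^3 - 2*q1*x + 3*t2*(x - q1^2) + (3*t2^2 + t1)*q1 + c/x)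
      = (fun x : ℝ => 0*x^2 + (-(p2^2) - 2*q1 + 3*t2)*x
          + (p1^2 + q1^3 - 3*t2*q1^2 + (3*t2^2 + t1)*q1) + c*x⁻¹) from by funext x; ring,
    show (fun x : ℝ => x^2 - q2*p2^2 + q1^3 - 2*q1*q2 + 3*t2*(q2 - q1^2) + (3*t2^2 + t1)*q1 + c/q2)
      = (fun x : ℝ => 0*x^3 + 1*x^2 + 0*x
          + (-(q2*p2^2) + q1^3 - 2*q1*q2 + 3*t2*(q2 - q1^2) + (3*t2^2 + t1)*q1 + c/q2))
        from by funext x; ring,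
    show (fun x : ℝ => p1^2 - q2*x^2 + q1^3 - 2*q1*q2 + 3*t2*(q2 - q1^2) + (3*t2^2 + t1)*q1 + c/q2)
      = (fun x : ℝ => 0*x^3 + (-q2)*x^2 + 0*x
          + (p1^2 + q1^3 - 2*q1*q2 + 3*t2*(q2 - q1^2) + (3*t2^2 + t1)*q1 + c/q2))
        from by funext x; ring,
    show (fun x : ℝ => p1^2 - q2*p2^2 + q1^3 - 2*q1*q2 + 3*x*(q2 - q1^2) + (3*x^2 + t1)*q1 + c/q2)
      = (fun x : ℝ => 0*x^3 + (3*q1)*x^2 + (3*(q2 - q1^2))*x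
          + (p1^2 - q2*p2^2 + q1^3 - 2*q1*q2 + t1*q1 + c/q2)) from by funext x; ring,
    show (fun x : ℝ => -2*q2*p1*p2 - x*q2*p2^2 + p1 + x^2*q2 - q2^2 - 3*t2*x*q2
          + (3*t2^2 + t1)*q2 + c*x/q2)
      = (fun x : ℝ => 0*x^3 + q2*x^2 + (-(q2*p2^2) - 3*t2*q2 + c/q2)*x
          + (-2*q2*p1*p2 + p1 - q2^2 + (3*t2^2 + t1)*q2)) from by funext x; ring,
    show (fun x : ℝ => -2*x*p1*p2 - q1*x*p2^2 + p1 + q1^2*x - x^2 - 3*t2*q1*x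
          + (3*t2^2 + t1)*x + c*q1/x)
      = (fun x : ℝ => (-1)*x^2 + (-(2*p1*p2) - q1*p2^2 + q1^2 - 3*t2*q1 + 3*t2^2 + t1)*x
          + p1 + (c*q1)*x⁻¹) from by funext x; ring,
    show (fun x : ℝ => -2*q2*x*p2 - q1*q2*p2^2 + x + q1^2*q2 - q2^2 - 3*t2*q1*q2
          + (3*t2^2 + t1)*q2 + c*q1/q2)
      = (fun x : ℝ => 0*x^3 + 0*x^2 + (-(2*q2*p2) + 1)*x
          + (-(q1*q2*p2^2) + q1^2*q2 - q2^2 - 3*t2*q1*q2 + (3*t2^2 + t1)*q2 + c*q1/q2))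
        from by funext x; ring,
    show (fun x : ℝ => -2*q2*p1*x - q1*q2*x^2 + p1 + q1^2*q2 - q2^2 - 3*t2*q1*q2
          + (3*t2^2 + t1)*q2 + c*q1/q2)
      = (fun x : ℝ => 0*x^3 + (-(q1*q2))*x^2 + (-(2*q2*p1))*x
          + (p1 + q1^2*q2 - q2^2 - 3*t2*q1*q2 + (3*t2^2 + t1)*q2 + c*q1/q2))
        from by funext x; ring,
    show (fun x : ℝ => -2*q2*p1*p2 - q1*q2*p2^2 + p1 + q1^2*q2 - q2^2 - 3*t2*q1*q2
          + (3*t2^2 + x)*q2 + c*q1/q2)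
      = (fun x : ℝ => 0*x^3 + 0*x^2 + q2*x
          + (-2*q2*p1*p2 - q1*q2*p2^2 + p1 + q1^2*q2 - q2^2 - 3*t2*q1*q2 + 3*t2^2*q2 + c*q1/q2))
        from by funext x; ring,
    deriv_cubic, deriv_quad_inv _ _ _ _ _ hq2,
    deriv_cubic, deriv_cubic, deriv_cubic, deriv_cubic, deriv_quad_inv _ _ _ _ _ hq2,
    deriv_cubic, deriv_cubic, deriv_cubic]
  field_simp
  ring
end

section
/- For the matrices U₁ = [[0,1],[λ−2q₁,0]] and U₂ = [[−p₃, λ+q₁],[λ²−q₁λ+q₁²−2q₂, p₃]] viewed along solutions of the n=3 Stäckel flows X₁ (with times x) and X₂ (with time t₂) of Example 1, the zero-curvature condition d/dt₂ U₁ − d/dx U₂ + [U₁,U₂] = 0 holds identically as a polynomial in λ. -/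
/-!
The entries of `U₁` and `U₂` depend on `q₁, q₂, p₃` only, so by the Leibniz rule the
zero-curvature matrix is determined by the four components `q₁ₓ, q₂ₓ, p₃ₓ` of `X₁` and `q₁_{t₂}`
of `X₂`. Substituting them, each entry vanishes identically as a polynomial in `λ` and `ξ`.
-/

/-- Directional derivative of a scalar function on ℝ⁶ along a vector field X. -/
noncomputable def dirDeriv (X : (Fin 6 → ℝ) → (Fin 6 → ℝ))
    (f : (Fin 6 → ℝ) → ℝ) (ξ : Fin 6 → ℝ) : ℝ :=
  fderiv ℝ f ξ (X ξ)

section DirDerivCalculus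

variable {X : (Fin 6 → ℝ) → (Fin 6 → ℝ)} {f g : (Fin 6 → ℝ) → ℝ} {ξ : Fin 6 → ℝ}

@[simp] lemma dirDeriv_const (r : ℝ) : dirDeriv X (fun _ => r) ξ = 0 := by
  simp [dirDeriv]

@[simp] lemma dirDeriv_apply (i : Fin 6) : dirDeriv X (fun η => η i) ξ = X ξ i := by
  simp [dirDeriv, (hasFDerivAt_apply i ξ).fderiv]

@[simp] lemma dirDeriv_neg : dirDeriv X (fun η => -f η) ξ = -dirDeriv X f ξ := by
  simp [dirDeriv, fderiv_fun_neg]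

lemma dirDeriv_add (hf : DifferentiableAt ℝ f ξ) (hg : DifferentiableAt ℝ g ξ) :
    dirDeriv X (fun η => f η + g η) ξ = dirDeriv X f ξ + dirDeriv X g ξ := by
  simp [dirDeriv, fderiv_fun_add hf hg]

lemma dirDeriv_sub (hf : DifferentiableAt ℝ f ξ) (hg : DifferentiableAt ℝ g ξ) :
    dirDeriv X (fun η => f η - g η) ξ = dirDeriv X f ξ - dirDeriv X g ξ := by
  simp [dirDeriv, fderiv_fun_sub hf hg]

lemma dirDeriv_mul (hf : DifferentiableAt ℝ f ξ) (hg : DifferentiableAt ℝ g ξ) :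
    dirDeriv X (fun η => f η * g η) ξ = dirDeriv X f ξ * g ξ + f ξ * dirDeriv X g ξ := by
  simp [dirDeriv, fderiv_fun_mul hf hg]
  ring

lemma dirDeriv_pow (hf : DifferentiableAt ℝ f ξ) (n : ℕ) :
    dirDeriv X (fun η => f η ^ n) ξ = n * f ξ ^ (n - 1) * dirDeriv X f ξ := by
  simp [dirDeriv, fderiv_fun_pow n hf]

end DirDerivCalculus

def laxU₁ (lam : ℝ) (ξ : Fin 6 → ℝ) : Matrix (Fin 2) (Fin 2) ℝ :=
  !![0, 1; lam - 2 * ξ 0, 0]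

def laxU₂ (lam : ℝ) (ξ : Fin 6 → ℝ) : Matrix (Fin 2) (Fin 2) ℝ :=
  !![-(ξ 5), lam + ξ 0; lam ^ 2 - ξ 0 * lam + ξ 0 ^ 2 - 2 * ξ 1, ξ 5]

theorem laxU_zeroCurvature_of_flow_components (X1 X2 : (Fin 6 → ℝ) → (Fin 6 → ℝ))
    (ξ : Fin 6 → ℝ) (hx_q1 : X1 ξ 0 = 2 * ξ 5) (hx_q2 : X1 ξ 1 = 2 * ξ 0 * ξ 5 + 2 * ξ 4)
    (hx_p3 : X1 ξ 5 = -3 * ξ 0 ^ 2 + 2 * ξ 1) (ht_q1 : X2 ξ 0 = 2 * ξ 4 + 2 * ξ 0 * ξ 5)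
    (lam : ℝ) :
    (Matrix.of fun i j =>
        dirDeriv X2 (fun η => laxU₁ lam η i j) ξ - dirDeriv X1 (fun η => laxU₂ lam η i j) ξ)
      + (laxU₁ lam ξ * laxU₂ lam ξ - laxU₂ lam ξ * laxU₁ lam ξ) = 0 := by
  ext i j
  fin_cases i <;> fin_cases j <;>
    simp (disch := fun_prop) [laxU₁, laxU₂, dirDeriv_add, dirDeriv_sub, dirDeriv_mul,
      dirDeriv_pow, hx_q1, hx_q2, hx_p3, ht_q1] <;>
    ring

theorem stmt8 (c : ℝ)
    (X1 X2 : (Fin 6 → ℝ) → (Fin 6 → ℝ))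
    (hX1 : X1 = fun ξ =>
      let q1 := ξ 0; let q2 := ξ 1; let q3 := ξ 2
      let p1 := ξ 3; let p2 := ξ 4; let p3 := ξ 5
      ![2*p3,
        2*q1*p3 + 2*p2,
        2*q1*p2 + 2*q2*p3 + 2*p1,
        -2*p2*p3 - 5*q1^4 + 12*q1^2*q2 - 6*q1*q3 - 3*q2^2 - c,
        -p3^2 + 4*q1^3 - 6*q1*q2 + 2*q3,
        -3*q1^2 + 2*q2])
    (hX2 : X2 = fun ξ =>
      let q1 := ξ 0; let q2 := ξ 1; let q3 := ξ 2
      let p1 := ξ 3; let p2 := ξ 4; let p3 := ξ 5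
      ![2*p2 + 2*q1*p3,
        2*p1 + 2*q1^2*p3 + 4*q1*p2,
        2*q1*p1 + 2*(q1*q2 - q3)*p3 + 2*q1^2*p2,
        -2*p1*p3 - 2*p2^2 - 4*q1*p2*p3 - q2*p3^2 + 6*q1*q2^2 - 4*q1^3*q2 + 3*q1^2*q3 - 4*q2*q3,
        -q1*p3^2 - q1^4 + 6*q1^2*q2 - 4*q1*q3 - 3*q2^2 - c,
        p3^2 + q1^3 - 4*q1*q2 + 2*q3])
    (U1 U2 : ℝ → (Fin 6 → ℝ) → Matrix (Fin 2) (Fin 2) ℝ)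
    (hU1 : U1 = fun lam ξ => !![0, 1; lam - 2 * ξ 0, 0])
    (hU2 : U2 = fun lam ξ =>
      !![-(ξ 5), lam + ξ 0;
         lam^2 - ξ 0 * lam + (ξ 0)^2 - 2 * ξ 1, ξ 5]) :
    ∀ (lam : ℝ) (ξ : Fin 6 → ℝ),
      (Matrix.of fun i j =>
          dirDeriv X2 (fun η => U1 lam η i j) ξ - dirDeriv X1 (fun η => U2 lam η i j) ξ)
        + (U1 lam ξ * U2 lam ξ - U2 lam ξ * U1 lam ξ) = 0 := by
  subst hU1 hU2
  intro lam ξ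
  exact laxU_zeroCurvature_of_flow_components X1 X2 ξ (by rw [hX1]; rfl) (by rw [hX1]; rfl)
    (by rw [hX1]; rfl) (by rw [hX2]; rfl) lam
end
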